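/- Current expansion for Ising lattice gauge theory: for every β ≥ 0 and every loop γ supported in B_N, the quantity Z_{β,N}[γ] = Σ_{σ∈Ω^1(B_N,ℤ₂)} W_γ(σ) e^{−βS(σ)} satisfies Z_{β,N}[γ] = |Ω^1(B_N,ℤ₂)| · Σ_{n ∈ 𝒞_γ} w_β(n), where the sum over currents converges absolutely. -/

import Mathlib

open scoped Classical

namespace LGT

/-- A site (vertex) of the lattice `ℤ^m`. -/
abbrev Site (m : ℕ) := Fin m → ℤ

/-- The `i`-th unit vector. -/
def unitVec (m : ℕ) (i : Fin m) : Site m := fun j => if j = i then 1 else 0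

/-- An oriented nearest-neighbour edge of `ℤ^m`: it joins `base` and `base + e_dir`,
oriented from `base` to `base + e_dir` when `ori = true`, and oppositely otherwise. -/
structure OEdge (m : ℕ) where
  base : Site m
  dir : Fin m
  ori : Bool
deriving DecidableEq

/-- An oriented plaquette of `ℤ^m` (valid when `dir1 < dir2`): the unit square with
corners `base, base + e_dir1, base + e_dir2, base + e_dir1 + e_dir2`, positively
oriented when `ori = true`. -/
structure OPlaq (m : ℕ) where
  base : Site m
  dir1 : Fin m
  dir2 : Fin m
  ori : Bool
deriving DecidableEq

/-- The same edge with reversed orientation. -/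
def OEdge.neg {m : ℕ} (e : OEdge m) : OEdge m := ⟨e.base, e.dir, !e.ori⟩

/-- The same plaquette with reversed orientation. -/
def OPlaq.neg {m : ℕ} (p : OPlaq m) : OPlaq m := ⟨p.base, p.dir1, p.dir2, !p.ori⟩

/-- The source vertex of an oriented edge. -/
def OEdge.src {m : ℕ} (e : OEdge m) : Site m :=
  if e.ori then e.base else e.base + unitVec m e.dir

/-- The target vertex of an oriented edge. -/
def OEdge.tgt {m : ℕ} (e : OEdge m) : Site m :=
  if e.ori then e.base + unitVec m e.dir else e.base

/-- `x ∈ B_N = [-N,N]^m ∩ ℤ^m`. -/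
def inBox (m N : ℕ) (x : Site m) : Prop := ∀ i, |x i| ≤ (N : ℤ)

/-- `C_1(B_N)`: oriented edges with both endpoints in `B_N`. -/
def C1 (m N : ℕ) : Set (OEdge m) :=
  {e | inBox m N e.base ∧ inBox m N (e.base + unitVec m e.dir)}

/-- The four corners of a plaquette. -/
def OPlaq.corners {m : ℕ} (p : OPlaq m) : List (Site m) :=
  [p.base, p.base + unitVec m p.dir1, p.base + unitVec m p.dir2,
    p.base + unitVec m p.dir1 + unitVec m p.dir2]

/-- The four oriented boundary edges of an oriented plaquette. -/
def OPlaq.bdry {m : ℕ} (p : OPlaq m) : List (OEdge m) :=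
  let l : List (OEdge m) :=
    [⟨p.base, p.dir1, true⟩, ⟨p.base + unitVec m p.dir1, p.dir2, true⟩,
     ⟨p.base + unitVec m p.dir2, p.dir1, false⟩, ⟨p.base, p.dir2, false⟩]
  if p.ori then l else l.map OEdge.neg

/-- `C_2(B_N)`: oriented plaquettes with all corners in `B_N`. -/
def C2 (m N : ℕ) : Set (OPlaq m) :=
  {p | p.dir1 < p.dir2 ∧ ∀ x ∈ p.corners, inBox m N x}

/-- `C_2(B_N)^+`: positively oriented plaquettes of `C_2(B_N)`. -/
def C2plus (m N : ℕ) : Set (OPlaq m) := {p | p ∈ C2 m N ∧ p.ori = true}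

/-- `supp ∂̂e`: the plaquettes of `C_2(B_N)` whose oriented boundary contains `e`. -/
def cob (m N : ℕ) (e : OEdge m) : Set (OPlaq m) := {p | p ∈ C2 m N ∧ e ∈ p.bdry}

/-- A loop: a finitely supported `ℤ`-valued function on oriented edges with values in
`{-1,0,1}`, odd under orientation reversal, whose boundary vanishes as a `0`-chain. -/
structure IsLoop (m : ℕ) (γ : OEdge m → ℤ) : Prop where
  finite_supp : (Function.support γ).Finite
  vals : ∀ e, γ e = -1 ∨ γ e = 0 ∨ γ e = 1
  antisym : ∀ e, γ (OEdge.neg e) = - γ e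
  bdry_zero : ∀ v : Site m,
    (∑ᶠ e : OEdge m, γ e *
      ((if OEdge.tgt e = v then 1 else 0) - (if OEdge.src e = v then (1 : ℤ) else 0))) = 0

/-- A loop supported in `B_N`. -/
def LoopIn (m N : ℕ) (γ : OEdge m → ℤ) : Prop :=
  IsLoop m γ ∧ ∀ e, γ e ≠ 0 → e ∈ C1 m N

/-- `Ω^1(B_N, ℤ₂)`: `ℤ₂`-valued one-forms on `C_1(B_N)`. -/
def Omega1 (m N : ℕ) : Set (OEdge m → ZMod 2) :=
  {σ | (∀ e, e ∉ C1 m N → σ e = 0) ∧ ∀ e, σ (OEdge.neg e) = - σ e}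

/-- The natural representation `ρ(g) = e^{iπ g} ∈ {±1}` of `ℤ₂`. -/
noncomputable def rho (g : ZMod 2) : ℝ := if g = 0 then 1 else -1

/-- The exterior derivative `dσ(p) = Σ_{e ∈ ∂p} σ(e)`. -/
def dOne {m : ℕ} (σ : OEdge m → ZMod 2) (p : OPlaq m) : ZMod 2 := (p.bdry.map σ).sum

/-- The Wilson action `S(σ) = -Σ_{p ∈ C_2(B_N)} ρ(dσ(p))`. -/
noncomputable def action (m N : ℕ) (σ : OEdge m → ZMod 2) : ℝ :=
  - ∑ᶠ p ∈ C2 m N, rho (dOne σ p)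

/-- The Wilson loop variable `W_γ(σ) = Π_{e ∈ (supp γ)^+} ρ(σ(e))`. -/
noncomputable def wilson (m : ℕ) (γ : OEdge m → ℤ) (σ : OEdge m → ZMod 2) : ℝ :=
  ∏ᶠ e ∈ {e : OEdge m | γ e ≠ 0 ∧ e.ori = true}, rho (σ e)

/-- `Z_{β,N}[γ] = Σ_{σ ∈ Ω^1(B_N,ℤ₂)} W_γ(σ) e^{-β S(σ)}`. -/
noncomputable def Z (m N : ℕ) (β : ℝ) (γ : OEdge m → ℤ) : ℝ :=
  ∑ᶠ σ ∈ Omega1 m N, wilson m γ σ * Real.exp (- β * action m N σ)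

/-- The finite-volume Gibbs expectation `E_{N,β}[f]`. -/
noncomputable def Eexp (m N : ℕ) (β : ℝ) (f : (OEdge m → ZMod 2) → ℝ) : ℝ :=
  (∑ᶠ σ ∈ Omega1 m N, f σ * Real.exp (- β * action m N σ)) /
    (∑ᶠ σ ∈ Omega1 m N, Real.exp (- β * action m N σ))

/-- `E_{N,β}[W_γ]`. -/
noncomputable def Ewilson (m N : ℕ) (β : ℝ) (γ : OEdge m → ℤ) : ℝ :=
  Eexp m N β (wilson m γ)

/-- A current: an integer-valued `2`-form on `C_2(B_N)` that is nonnegative on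
positively oriented plaquettes. -/
def IsCurrent (m N : ℕ) (n : OPlaq m → ℤ) : Prop :=
  (∀ p, p ∉ C2 m N → n p = 0) ∧ (∀ p, n (OPlaq.neg p) = - n p) ∧
    (∀ p ∈ C2plus m N, 0 ≤ n p)

/-- `𝒞_γ`: the currents with source `γ`. -/
def CurSet (m N : ℕ) (γ : OEdge m → ℤ) : Set (OPlaq m → ℤ) :=
  {n | IsCurrent m N n ∧ ∀ e ∈ C1 m N,
      ((γ e : ZMod 2) + ∑ᶠ p ∈ cob m N e, ((n p : ZMod 2))) = 0}

/-- The weight `w_β(n) = Π_{p ∈ C_2(B_N)^+} (2β)^{n(p)}/n(p)!` of a current. -/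
noncomputable def wgt (m N : ℕ) (β : ℝ) (n : OPlaq m → ℤ) : ℝ :=
  ∏ᶠ p ∈ C2plus m N, (2 * β) ^ (n p).toNat / (Nat.factorial (n p).toNat)

/-- `q ≤ n` on positively oriented plaquettes. -/
def leOn (m N : ℕ) (q n : OPlaq m → ℤ) : Prop := ∀ p ∈ C2plus m N, q p ≤ n p

/-- `𝒫_γ^{ht}`: `ℤ₂`-valued `2`-forms on `C_2(B_N)` with `δω = γ (mod 2)`. -/
def HTset (m N : ℕ) (γ : OEdge m → ℤ) : Set (OPlaq m → ZMod 2) :=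
  {ω | (∀ p, p ∉ C2 m N → ω p = 0) ∧ (∀ p, ω (OPlaq.neg p) = - ω p) ∧
    ∀ e ∈ C1 m N, (∑ᶠ p ∈ cob m N e, ω p) = (γ e : ZMod 2)}

/-- `(supp ω)^+`. -/
def suppPlus (m N : ℕ) (ω : OPlaq m → ZMod 2) : Set (OPlaq m) :=
  {p | p ∈ C2plus m N ∧ ω p ≠ 0}

/-- The high-temperature weight `(tanh 2β)^{|(supp ω)^+|}`. -/
noncomputable def htWeight (m N : ℕ) (β : ℝ) (ω : OPlaq m → ZMod 2) : ℝ :=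
  Real.tanh (2 * β) ^ (Nat.card ↥(suppPlus m N ω))

/-- The high-temperature model `P^γ_{B_N,β}`: probability mass of `ω ∈ 𝒫_γ^{ht}`. -/
noncomputable def htProb (m N : ℕ) (β : ℝ) (γ : OEdge m → ℤ) (ω : OPlaq m → ZMod 2) : ℝ :=
  htWeight m N β ω / ∑ᶠ ω' ∈ HTset m N γ, htWeight m N β ω'

/-- The random current model `𝐏^γ_{B_N,β}`: probability of an event `A ⊆ 𝒞_γ`. -/
noncomputable def rcProb (m N : ℕ) (β : ℝ) (γ : OEdge m → ℤ) (A : Set (OPlaq m → ℤ)) : ℝ :=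
  (∑' n : ↥(CurSet m N γ ∩ A), wgt m N β n) / (∑' n : ↥(CurSet m N γ), wgt m N β n)

/-- The trace `n̂` of a current: the set of positively oriented plaquettes where `n > 0`. -/
def hatCur (m N : ℕ) (n : OPlaq m → ℤ) : Set (OPlaq m) :=
  {p | p ∈ C2plus m N ∧ 0 < n p}

/-- The probability that iid Bernoulli plaquette percolation `Ψ_q` on `C_2(B_N)^+`
produces exactly the configuration (subset) `A`. -/
noncomputable def bernoulli (m N : ℕ) (q : ℝ) (A : Set (OPlaq m)) : ℝ :=
  ∏ᶠ p ∈ C2plus m N, (if p ∈ A then q else 1 - q)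

/-- `∂P ≡ γ (mod 2)`: for every edge `e ∈ C_1(B_N)` the number of plaquettes of `P`
whose boundary contains `e` or `-e` is congruent to `γ(e)` mod `2`. -/
def BdryCong (m N : ℕ) (P : Set (OPlaq m)) (γ : OEdge m → ℤ) : Prop :=
  ∀ e ∈ C1 m N,
    ((Nat.card ↥{p ∈ P | e ∈ p.bdry ∨ OEdge.neg e ∈ p.bdry} : ZMod 2)) = (γ e : ZMod 2)

/-- `𝒫_γ`: subsets of `C_2(B_N)^+` containing a subset with boundary `γ (mod 2)`. -/
def PlaqSet (m N : ℕ) (γ : OEdge m → ℤ) : Set (Set (OPlaq m)) :=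
  {P | P ⊆ C2plus m N ∧ ∃ P', P' ⊆ P ∧ BdryCong m N P' γ}

/-- `N₀(P)`: the number of `σ ∈ Ω^1(B_N,ℤ₂)` with `dσ(p) = 0` for all `p ∈ P`. -/
noncomputable def N0 (m N : ℕ) (P : Set (OPlaq m)) : ℕ :=
  Nat.card ↥{σ ∈ Omega1 m N | ∀ p ∈ P, dOne σ p = 0}

/-- The random cluster weight `N₀(P) q^{|P|} (1-q)^{|C_2(B_N)^+ ∖ P|}`. -/
noncomputable def rcmWeight (m N : ℕ) (q : ℝ) (P : Set (OPlaq m)) : ℝ :=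
  (N0 m N P : ℝ) * q ^ (Nat.card ↥P) * (1 - q) ^ (Nat.card ↥(C2plus m N \ P))

/-- The random cluster model `φ^γ_{B_N,q}`: probability mass of `P` (zero off `𝒫_γ`). -/
noncomputable def rcmProb (m N : ℕ) (q : ℝ) (γ : OEdge m → ℤ) (P : Set (OPlaq m)) : ℝ :=
  (if P ∈ PlaqSet m N γ then rcmWeight m N q P else 0) /
    ∑ᶠ P' ∈ PlaqSet m N γ, rcmWeight m N q P'

/-- `S_γ(P)`: the subsets of `P` with boundary `γ (mod 2)`. -/
def Sset (m N : ℕ) (γ : OEdge m → ℤ) (P : Set (OPlaq m)) : Set (Set (OPlaq m)) :=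
  {P' | P' ⊆ P ∧ BdryCong m N P' γ}

/-- The `ℤ₂`-valued `2`-form whose support among positively oriented plaquettes is `P'`. -/
noncomputable def formOf {m : ℕ} (P' : Set (OPlaq m)) : OPlaq m → ZMod 2 :=
  fun p => if p ∈ P' ∨ OPlaq.neg p ∈ P' then 1 else 0

/-- The vertices of the support of a loop. -/
def vertsOf (m : ℕ) (γ : OEdge m → ℤ) : Set (Site m) :=
  {x | ∃ e, γ e ≠ 0 ∧ (x = OEdge.src e ∨ x = OEdge.tgt e)}

/-- The graph (`ℓ¹`) distance between two sites of `ℤ^m`. -/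
def distL1 (m : ℕ) (x y : Site m) : ℕ := ∑ i, (x i - y i).natAbs

/-- The minimal graph distance between the supports of two loops. -/
noncomputable def suppDist (m : ℕ) (γ γ' : OEdge m → ℤ) : ℕ :=
  sInf {d | ∃ x ∈ vertsOf m γ, ∃ y ∈ vertsOf m γ', d = distL1 m x y}

/-- `area(γ) = min_{n ∈ 𝒞_γ} Σ_{p ∈ C_2(B_N)^+} n(p)`. -/
noncomputable def areaOf (m N : ℕ) (γ : OEdge m → ℤ) : ℕ :=
  sInf {k : ℕ | ∃ n ∈ CurSet m N γ, (∑ᶠ p ∈ C2plus m N, n p) = (k : ℤ)}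

/-- Translation of a loop by a lattice vector. -/
def translate (m : ℕ) (v : Site m) (γ : OEdge m → ℤ) : OEdge m → ℤ :=
  fun e => γ ⟨e.base - v, e.dir, e.ori⟩

/-- The site `a·e₀ + b·e₁` in the fixed coordinate plane spanned by the first two
coordinate directions. -/
def planeSite (m : ℕ) (h : 1 < m) (a b : ℤ) : Site m :=
  fun j => if j = (⟨0, by omega⟩ : Fin m) then a else if j = (⟨1, h⟩ : Fin m) then b else 0

/-- The axis-parallel rectangular loop `γ_{R,T}` with corners `0, R·e₀, R·e₀+T·e₁, T·e₁`
in the fixed coordinate plane spanned by the first two coordinate directions. -/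
noncomputable def rectLoop (m : ℕ) (h : 1 < m) (R T : ℕ) : OEdge m → ℤ := fun e =>
  (∑ k ∈ Finset.range R,
    ((if e = ⟨planeSite m h k 0, ⟨0, by omega⟩, true⟩ then (1 : ℤ) else 0)
      - (if e = OEdge.neg ⟨planeSite m h k 0, ⟨0, by omega⟩, true⟩ then 1 else 0)
      - (if e = ⟨planeSite m h k T, ⟨0, by omega⟩, true⟩ then 1 else 0)
      + (if e = OEdge.neg ⟨planeSite m h k T, ⟨0, by omega⟩, true⟩ then 1 else 0)))
  + (∑ k ∈ Finset.range T,
    ((if e = ⟨planeSite m h R k, ⟨1, h⟩, true⟩ then (1 : ℤ) else 0)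
      - (if e = OEdge.neg ⟨planeSite m h R k, ⟨1, h⟩, true⟩ then 1 else 0)
      - (if e = ⟨planeSite m h 0 k, ⟨1, h⟩, true⟩ then 1 else 0)
      + (if e = OEdge.neg ⟨planeSite m h 0 k, ⟨1, h⟩, true⟩ then 1 else 0)))

/-! ### Auxiliary lemmas -/

section Aux

lemma zmod2_cases (x : ZMod 2) : x = 0 ∨ x = 1 := by revert x; decide

lemma zmod2_neg (x : ZMod 2) : -x = x := by revert x; decide

lemma zmod2_add_self (x : ZMod 2) : x + x = 0 := by revert x; decide

@[simp] lemma rho_zero : rho 0 = 1 := by simp [rho]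

@[simp] lemma rho_one : rho 1 = -1 := by simp [rho]

lemma rho_add (a b : ZMod 2) : rho (a + b) = rho a * rho b := by
  rcases zmod2_cases a with ha | ha <;> rcases zmod2_cases b with hb | hb <;>
    subst ha <;> subst hb <;> simp [rho, show (1 + 1 : ZMod 2) = 0 by decide]

lemma rho_pow (x : ZMod 2) (k : ℕ) : rho x ^ k = rho ((k : ZMod 2) * x) := by
  induction k with
  | zero => simp
  | succ k ih =>
      rw [pow_succ, ih, ← rho_add]
      congr 1
      push_cast
      ring

lemma rho_sum {α : Type*} (s : Finset α) (f : α → ZMod 2) :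
    rho (∑ i ∈ s, f i) = ∏ i ∈ s, rho (f i) := by
  classical
  induction s using Finset.cons_induction with
  | empty => simp
  | cons a s ha ih => rw [Finset.sum_cons, Finset.prod_cons, rho_add, ih]

@[simp] lemma OEdge.neg_neg {m : ℕ} (e : OEdge m) : e.neg.neg = e := by
  simp [OEdge.neg]

@[simp] lemma OPlaq.neg_neg {m : ℕ} (p : OPlaq m) : p.neg.neg = p := by
  simp [OPlaq.neg]

lemma neg_mem_C1 {m N : ℕ} {e : OEdge m} : (OEdge.neg e) ∈ C1 m N ↔ e ∈ C1 m N := Iff.rfl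

end Aux

section Finiteness

lemma finite_box (m N : ℕ) : {x : Site m | inBox m N x}.Finite := by
  have h : {x : Site m | inBox m N x} ⊆ Set.pi Set.univ (fun _ : Fin m => Set.Icc (-(N : ℤ)) N) := by
    intro x hx
    intro i _
    exact abs_le.mp (hx i)
  exact Set.Finite.subset (Set.Finite.pi (fun i => Set.finite_Icc _ _)) h

lemma finite_C1 (m N : ℕ) : (C1 m N).Finite := by
  have h : C1 m N ⊆ (fun t : Site m × Fin m × Bool => OEdge.mk t.1 t.2.1 t.2.2) ''
      ({x : Site m | inBox m N x} ×ˢ Set.univ) := by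
    rintro ⟨b, d, o⟩ he
    exact ⟨(b, d, o), ⟨he.1, Set.mem_univ _⟩, rfl⟩
  exact Set.Finite.subset (Set.Finite.image _ ((finite_box m N).prod Set.finite_univ)) h

lemma corners_base_mem {m : ℕ} (p : OPlaq m) : p.base ∈ p.corners := by
  simp [OPlaq.corners]

lemma finite_C2 (m N : ℕ) : (C2 m N).Finite := by
  have h : C2 m N ⊆ (fun t : Site m × Fin m × Fin m × Bool => OPlaq.mk t.1 t.2.1 t.2.2.1 t.2.2.2) ''
      ({x : Site m | inBox m N x} ×ˢ Set.univ) := by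
    rintro ⟨b, d1, d2, o⟩ hp
    exact ⟨(b, d1, d2, o), ⟨hp.2 _ (corners_base_mem _), Set.mem_univ _⟩, rfl⟩
  exact Set.Finite.subset (Set.Finite.image _ ((finite_box m N).prod Set.finite_univ)) h

lemma finite_Omega1 (m N : ℕ) : (Omega1 m N).Finite := by
  classical
  rw [← Set.finite_coe_iff]
  have hC1 := finite_C1 m N
  let S := hC1.toFinset
  have : ∀ σ : ↥(Omega1 m N), ∀ e : OEdge m, e ∉ C1 m N → σ.1 e = 0 := fun σ e he => σ.2.1 e he
  apply Finite.of_injective (fun σ : ↥(Omega1 m N) => (fun e : ↥(S : Set (OEdge m)) => σ.1 e.1))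
  intro σ τ h
  apply Subtype.ext
  funext e
  by_cases he : e ∈ C1 m N
  · have heS : e ∈ (S : Set (OEdge m)) := by simp [S, hC1.mem_toFinset, he]
    exact congrFun h ⟨e, heS⟩
  · rw [σ.2.1 e he, τ.2.1 e he]

lemma finite_cob (m N : ℕ) (e : OEdge m) : (cob m N e).Finite :=
  (finite_C2 m N).subset (fun p hp => hp.1)

end Finiteness

section Finsets

variable (m N : ℕ)

/-- positively oriented edges of `C1` as a finset -/
noncomputable def Efin : Finset (OEdge m) :=
  (finite_C1 m N).toFinset.filter (fun e => e.ori = true)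

/-- positively oriented plaquettes of `C2` as a finset -/
noncomputable def Pfin : Finset (OPlaq m) :=
  (finite_C2 m N).toFinset.filter (fun p => p.ori = true)

/-- `C2` as a finset -/
noncomputable def C2fin : Finset (OPlaq m) := (finite_C2 m N).toFinset

/-- `Omega1` as a finset -/
noncomputable def Ofin : Finset (OEdge m → ZMod 2) := (finite_Omega1 m N).toFinset

variable {m N}

@[simp] lemma mem_Efin {e : OEdge m} : e ∈ Efin m N ↔ e ∈ C1 m N ∧ e.ori = true := by
  simp [Efin, (finite_C1 m N).mem_toFinset]

@[simp] lemma mem_Pfin {p : OPlaq m} : p ∈ Pfin m N ↔ p ∈ C2 m N ∧ p.ori = true := by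
  simp [Pfin, (finite_C2 m N).mem_toFinset]

@[simp] lemma mem_C2fin {p : OPlaq m} : p ∈ C2fin m N ↔ p ∈ C2 m N := by
  simp [C2fin, (finite_C2 m N).mem_toFinset]

@[simp] lemma mem_Ofin {σ : OEdge m → ZMod 2} : σ ∈ Ofin m N ↔ σ ∈ Omega1 m N := by
  simp [Ofin, (finite_Omega1 m N).mem_toFinset]

lemma mem_Pfin_iff_C2plus {p : OPlaq m} : p ∈ Pfin m N ↔ p ∈ C2plus m N := mem_Pfin

lemma Ofin_card : (Ofin m N).card = Nat.card ↥(Omega1 m N) := by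
  rw [Nat.card_coe_set_eq, Set.ncard_eq_toFinset_card (Omega1 m N) (finite_Omega1 m N)]
  rfl

end Finsets

section Geometry

variable {m N : ℕ}

/-- whether `e` or `-e` lies on the boundary of `p` -/
def touch (p : OPlaq m) (e : OEdge m) : Prop := e ∈ p.bdry ∨ OEdge.neg e ∈ p.bdry

lemma touch_neg (p : OPlaq m) (e : OEdge m) : touch p (OEdge.neg e) ↔ touch p e := by
  unfold touch
  rw [OEdge.neg_neg]
  exact or_comm

/-- the four positive boundary edges of a plaquette -/
def pe1 (p : OPlaq m) : OEdge m := ⟨p.base, p.dir1, true⟩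
def pe2 (p : OPlaq m) : OEdge m := ⟨p.base + unitVec m p.dir1, p.dir2, true⟩
def pe3 (p : OPlaq m) : OEdge m := ⟨p.base + unitVec m p.dir2, p.dir1, true⟩
def pe4 (p : OPlaq m) : OEdge m := ⟨p.base, p.dir2, true⟩

lemma bdry_true {p : OPlaq m} (h : p.ori = true) :
    p.bdry = [pe1 p, pe2 p, OEdge.neg (pe3 p), OEdge.neg (pe4 p)] := by
  simp [OPlaq.bdry, h, pe1, pe2, pe3, pe4, OEdge.neg]

lemma bdry_neg (p : OPlaq m) : (OPlaq.neg p).bdry = p.bdry.map OEdge.neg := by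
  rcases p with ⟨b, d1, d2, o⟩
  cases o <;> simp [OPlaq.bdry, OPlaq.neg, OEdge.neg]

lemma mem_bdry_neg {p : OPlaq m} {e : OEdge m} : e ∈ (OPlaq.neg p).bdry ↔ OEdge.neg e ∈ p.bdry := by
  rw [bdry_neg, List.mem_map]
  constructor
  · rintro ⟨a, ha, rfl⟩
    rwa [OEdge.neg_neg]
  · intro h
    exact ⟨OEdge.neg e, h, OEdge.neg_neg e⟩

lemma add_unitVec_ne (z : Site m) (i : Fin m) : z + unitVec m i ≠ z := by
  intro h
  have := congrFun h i
  simp [unitVec] at this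

lemma neg_mem_C2 {p : OPlaq m} : OPlaq.neg p ∈ C2 m N ↔ p ∈ C2 m N := Iff.rfl

lemma OEdge_neg_inj {e f : OEdge m} (h : OEdge.neg e = OEdge.neg f) : e = f := by
  rw [← OEdge.neg_neg e, h, OEdge.neg_neg]

lemma pe_ne (p : OPlaq m) (hp : p ∈ C2 m N) :
    pe1 p ≠ pe2 p ∧ pe1 p ≠ pe3 p ∧ pe1 p ≠ pe4 p ∧ pe2 p ≠ pe3 p ∧ pe2 p ≠ pe4 p ∧
      pe3 p ≠ pe4 p := by
  have hd : p.dir1 ≠ p.dir2 := ne_of_lt hp.1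
  refine ⟨?_, ?_, ?_, ?_, ?_, ?_⟩ <;> intro h <;>
    simp only [pe1, pe2, pe3, pe4, OEdge.mk.injEq] at h
  · exact hd h.2.1
  · exact add_unitVec_ne p.base p.dir2 h.1.symm
  · exact hd h.2.1
  · exact hd h.2.1.symm
  · exact add_unitVec_ne p.base p.dir1 h.1
  · exact hd h.2.1

lemma pe_mem_C1 (p : OPlaq m) (hp : p ∈ C2 m N) :
    pe1 p ∈ C1 m N ∧ pe2 p ∈ C1 m N ∧ pe3 p ∈ C1 m N ∧ pe4 p ∈ C1 m N := by
  obtain ⟨-, hc⟩ := hp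
  have h1 := hc p.base (by simp [OPlaq.corners])
  have h2 := hc (p.base + unitVec m p.dir1) (by simp [OPlaq.corners])
  have h3 := hc (p.base + unitVec m p.dir2) (by simp [OPlaq.corners])
  have h4 := hc (p.base + unitVec m p.dir1 + unitVec m p.dir2) (by simp [OPlaq.corners])
  refine ⟨⟨h1, h2⟩, ⟨h2, h4⟩, ⟨h3, ?_⟩, ⟨h1, h3⟩⟩
  show inBox m N (p.base + unitVec m p.dir2 + unitVec m p.dir1)
  have heq : p.base + unitVec m p.dir2 + unitVec m p.dir1
      = p.base + unitVec m p.dir1 + unitVec m p.dir2 := by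
    abel
  rw [heq]
  exact h4

/-- an edge and its reverse cannot both lie on the boundary of a plaquette of `C2` -/
lemma disjoint_bdry {p : OPlaq m} (hp : p ∈ C2 m N) {e : OEdge m} (he : e ∈ p.bdry) :
    e ∉ (OPlaq.neg p).bdry := by
  -- reduce to the positively-oriented case
  suffices H : ∀ q : OPlaq m, q ∈ C2 m N → q.ori = true → ∀ f : OEdge m,
      f ∈ q.bdry → f ∉ (OPlaq.neg q).bdry by
    rcases Bool.eq_false_or_eq_true p.ori with ho | ho
    · exact H p hp ho e he
    · intro hmem
      have hpn : OPlaq.neg p ∈ C2 m N := neg_mem_C2.mpr hp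
      have hno : (OPlaq.neg p).ori = true := by simp [OPlaq.neg, ho]
      have hH := H (OPlaq.neg p) hpn hno e hmem
      rw [OPlaq.neg_neg] at hH
      exact hH he
  intro q hq ho f hf hfn
  obtain ⟨h12, h13, h14, h23, h24, h34⟩ := pe_ne q hq
  rw [bdry_true ho] at hf
  rw [bdry_neg, bdry_true ho] at hfn
  simp only [List.map_cons, List.map_nil, OEdge.neg_neg] at hfn
  simp only [List.mem_cons, List.not_mem_nil, or_false] at hf hfn
  rcases hf with rfl | rfl | rfl | rfl <;> rcases hfn with h | h | h | h <;>
    first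
      | exact h13 h
      | exact h14 h
      | exact h23 h
      | exact h24 h
      | exact h13 (OEdge_neg_inj h).symm
      | exact h14 (OEdge_neg_inj h).symm
      | exact h23 (OEdge_neg_inj h).symm
      | exact h24 (OEdge_neg_inj h).symm
      | (have hor := congrArg OEdge.ori h;
         simp [OEdge.neg, pe1, pe2, pe3, pe4] at hor)

end Geometry

section DOne

variable {m N : ℕ}

lemma filter_touch {p : OPlaq m} (hp : p ∈ C2 m N) (ho : p.ori = true) :
    (Efin m N).filter (fun e => touch p e) = {pe1 p, pe2 p, pe3 p, pe4 p} := by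
  obtain ⟨hm1, hm2, hm3, hm4⟩ := pe_mem_C1 p hp
  ext e
  simp only [Finset.mem_filter, mem_Efin, Finset.mem_insert, Finset.mem_singleton]
  constructor
  · rintro ⟨⟨heC1, heori⟩, ht⟩
    rcases ht with hmem | hmem <;> rw [bdry_true ho] at hmem <;>
      simp only [List.mem_cons, List.not_mem_nil, or_false] at hmem
    · rcases hmem with rfl | rfl | rfl | rfl
      · exact Or.inl rfl
      · exact Or.inr (Or.inl rfl)
      · simp [OEdge.neg, pe3] at heori
      · simp [OEdge.neg, pe4] at heori
    · rcases hmem with h | h | h | h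
      · exact absurd (congrArg OEdge.ori h) (by simp [OEdge.neg, pe1, heori])
      · exact absurd (congrArg OEdge.ori h) (by simp [OEdge.neg, pe2, heori])
      · exact Or.inr (Or.inr (Or.inl (OEdge_neg_inj h)))
      · exact Or.inr (Or.inr (Or.inr (OEdge_neg_inj h)))
  · intro hmem
    rcases hmem with rfl | rfl | rfl | rfl
    · exact ⟨⟨hm1, rfl⟩, Or.inl (by rw [bdry_true ho]; simp)⟩
    · exact ⟨⟨hm2, rfl⟩, Or.inl (by rw [bdry_true ho]; simp)⟩
    · exact ⟨⟨hm3, rfl⟩, Or.inr (by rw [bdry_true ho]; simp)⟩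
    · exact ⟨⟨hm4, rfl⟩, Or.inr (by rw [bdry_true ho]; simp)⟩

lemma dOne_neg {σ : OEdge m → ZMod 2} (hσ : ∀ e, σ (OEdge.neg e) = - σ e) (p : OPlaq m) :
    dOne σ (OPlaq.neg p) = dOne σ p := by
  unfold dOne
  rw [bdry_neg, List.map_map]
  congr 1
  apply List.map_congr_left
  intro e _
  rw [Function.comp_apply, hσ, zmod2_neg]

lemma dOne_eq {σ : OEdge m → ZMod 2} (hσ : ∀ e, σ (OEdge.neg e) = - σ e)
    {p : OPlaq m} (hp : p ∈ C2 m N) (ho : p.ori = true) :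
    dOne σ p = ∑ e ∈ Efin m N, (if touch p e then 1 else 0) * σ e := by
  classical
  obtain ⟨h12, h13, h14, h23, h24, h34⟩ := pe_ne p hp
  have : (∑ e ∈ Efin m N, (if touch p e then 1 else 0) * σ e)
      = ∑ e ∈ (Efin m N).filter (fun e => touch p e), σ e := by
    rw [Finset.sum_filter]
    apply Finset.sum_congr rfl
    intro e _
    by_cases h : touch p e <;> simp [h]
  rw [this, filter_touch hp ho,
    Finset.sum_insert (by simp [h12, h13, h14]),
    Finset.sum_insert (by simp [h23, h24]),
    Finset.sum_insert (by simp [h34]), Finset.sum_singleton]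
  simp only [dOne, bdry_true ho, List.map_cons, List.map_nil, List.sum_cons, List.sum_nil,
    hσ, zmod2_neg]
  ring

end DOne

section Cob

variable {m N : ℕ}

lemma cob_sum (n' : OPlaq m → ℤ) (hanti : ∀ p, n' (OPlaq.neg p) = - n' p) (e : OEdge m) :
    (∑ᶠ p ∈ cob m N e, ((n' p : ZMod 2))) =
      ∑ p ∈ Pfin m N, (n' p : ZMod 2) * (if touch p e then 1 else 0) := by
  classical
  -- convert finsum to a sum over the finset of `cob`
  have hfin : (cob m N e).Finite := finite_cob m N e
  have hsub : (cob m N e ∩ Function.support fun p => ((n' p : ZMod 2))).Finite :=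
    hfin.inter_of_left _
  rw [finsum_mem_eq_sum _ hsub]
  have hstep : ∑ p ∈ hsub.toFinset, ((n' p : ZMod 2)) = ∑ p ∈ hfin.toFinset, ((n' p : ZMod 2)) := by
    apply Finset.sum_subset
    · intro p hp
      rw [Set.Finite.mem_toFinset] at hp ⊢
      exact hp.1
    · intro p hp hnp
      rw [Set.Finite.mem_toFinset] at hp
      rw [Set.Finite.mem_toFinset] at hnp
      by_contra hval
      exact hnp ⟨hp, hval⟩
  rw [hstep]
  -- now a bijection onto the positively oriented plaquettes touching `e`
  have : ∑ p ∈ hfin.toFinset, ((n' p : ZMod 2))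
      = ∑ p ∈ (Pfin m N).filter (fun q => touch q e), ((n' p : ZMod 2)) := by
    apply Finset.sum_nbij' (fun p => if p.ori = true then p else OPlaq.neg p)
      (fun q => if e ∈ q.bdry then q else OPlaq.neg q)
    · intro p hp
      rw [Set.Finite.mem_toFinset] at hp
      obtain ⟨hpC2, hpe⟩ := hp
      by_cases ho : p.ori = true
      · rw [if_pos ho]
        rw [Finset.mem_filter, mem_Pfin]
        exact ⟨⟨hpC2, ho⟩, Or.inl hpe⟩
      · rw [if_neg ho]
        have hof : p.ori = false := by simpa using ho
        rw [Finset.mem_filter, mem_Pfin]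
        refine ⟨⟨neg_mem_C2.mpr hpC2, by simp [OPlaq.neg, hof]⟩, Or.inr ?_⟩
        rw [mem_bdry_neg, OEdge.neg_neg]
        exact hpe
    · intro q hq
      rw [Finset.mem_filter, mem_Pfin] at hq
      obtain ⟨⟨hqC2, hqo⟩, ht⟩ := hq
      rw [Set.Finite.mem_toFinset]
      by_cases hb : e ∈ q.bdry
      · rw [if_pos hb]
        exact ⟨hqC2, hb⟩
      · rw [if_neg hb]
        rcases ht with ht | ht
        · exact absurd ht hb
        · exact ⟨neg_mem_C2.mpr hqC2, mem_bdry_neg.mpr ht⟩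
    · intro p hp
      rw [Set.Finite.mem_toFinset] at hp
      obtain ⟨hpC2, hpe⟩ := hp
      by_cases ho : p.ori = true
      · rw [if_pos ho, if_pos hpe]
      · rw [if_neg ho]
        have hne : e ∉ (OPlaq.neg p).bdry := disjoint_bdry hpC2 hpe
        rw [if_neg hne, OPlaq.neg_neg]
    · intro q hq
      rw [Finset.mem_filter, mem_Pfin] at hq
      obtain ⟨⟨hqC2, hqo⟩, ht⟩ := hq
      by_cases hb : e ∈ q.bdry
      · rw [if_pos hb, if_pos hqo]
      · rw [if_neg hb]
        have hno : ¬((OPlaq.neg q).ori = true) := by simp [OPlaq.neg, hqo]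
        rw [if_neg hno, OPlaq.neg_neg]
    · intro p hp
      by_cases ho : p.ori = true
      · rw [if_pos ho]
      · rw [if_neg ho, hanti p, Int.cast_neg, zmod2_neg]
  rw [this, Finset.sum_filter]
  apply Finset.sum_congr rfl
  intro p _
  by_cases h : touch p e <;> simp [h]

lemma cob_sum_neg (n' : OPlaq m → ℤ) (hanti : ∀ p, n' (OPlaq.neg p) = - n' p) (e : OEdge m) :
    (∑ᶠ p ∈ cob m N (OEdge.neg e), ((n' p : ZMod 2))) =
      ∑ᶠ p ∈ cob m N e, ((n' p : ZMod 2)) := by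
  rw [cob_sum n' hanti, cob_sum n' hanti]
  apply Finset.sum_congr rfl
  intro p _
  rw [touch_neg]

end Cob
set_option linter.deprecated false


section ProdTsum

lemma mul_summable_aux {α β : Type*} (F : α → ℝ) (G : β → ℝ)
    (hF : Summable fun k => ‖F k‖) (hG : Summable fun ν => ‖G ν‖) :
    Summable fun q : α × β => F q.1 * G q.2 :=
  summable_mul_of_summable_norm hF hG

lemma mul_tsum_aux {α β : Type*} (F : α → ℝ) (G : β → ℝ)
    (hF : Summable fun k => ‖F k‖) (hG : Summable fun ν => ‖G ν‖) :
    ∑' q : α × β, F q.1 * G q.2 = (∑' k, F k) * ∑' ν, G ν :=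
  (tsum_mul_tsum_of_summable_norm hF hG).symm

lemma fin_prod_tsum : ∀ (r : ℕ) (f : Fin r → ℕ → ℝ), (∀ a, Summable fun k => |f a k|) →
    Summable (fun n : Fin r → ℕ => |∏ a, f a (n a)|) ∧
      (∑' n : Fin r → ℕ, ∏ a, f a (n a)) = ∏ a, ∑' k, f a k := by
  intro r
  induction r with
  | zero =>
      intro f _
      have huniq : ∀ b : Fin 0 → ℕ, b = (fun x => x.elim0) := fun b => funext fun x => x.elim0
      constructor
      · exact (hasSum_single (fun x => x.elim0) fun b hb => absurd (huniq b) hb).summable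
      · rw [tsum_eq_single (fun x => x.elim0) (fun b hb => absurd (huniq b) hb)]
        simp
  | succ r ih =>
      intro f hf
      obtain ⟨ihS, ihT⟩ := ih (fun a => f a.succ) (fun a => hf a.succ)
      have h0 : Summable fun k => ‖f 0 k‖ := by simpa only [Real.norm_eq_abs] using hf 0
      have hT : Summable fun ν : Fin r → ℕ => ‖∏ a, f a.succ (ν a)‖ := by
        simpa only [Real.norm_eq_abs] using ihS
      have h0' : Summable fun k => ‖|f 0 k|‖ := by
        simpa only [Real.norm_eq_abs, abs_abs] using hf 0
      have hT' : Summable fun ν : Fin r → ℕ => ‖|∏ a, f a.succ (ν a)|‖ := by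
        simpa only [Real.norm_eq_abs, abs_abs] using ihS
      have S2 : Summable fun q : ℕ × (Fin r → ℕ) => |f 0 q.1| * |∏ a, f a.succ (q.2 a)| := by
        apply mul_summable_aux (fun k => |f 0 k|) (fun ν : Fin r → ℕ => |∏ a, f a.succ (ν a)|) h0'
        exact hT'
      have key : (fun n : Fin (r + 1) → ℕ => ∏ a, f a (n a))
          = fun n => (fun q : ℕ × (Fin r → ℕ) => f 0 q.1 * ∏ a, f a.succ (q.2 a))
              ((Fin.consEquiv (fun _ : Fin (r + 1) => ℕ)).symm n) := by
        funext n
        rw [Fin.prod_univ_succ]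
        rfl
      constructor
      · have habs : (fun n : Fin (r + 1) → ℕ => |∏ a, f a (n a)|)
            = fun n => (fun q : ℕ × (Fin r → ℕ) => |f 0 q.1 * ∏ a, f a.succ (q.2 a)|)
                ((Fin.consEquiv (fun _ : Fin (r + 1) => ℕ)).symm n) := by
          funext n
          rw [congrFun key n]
        rw [habs]
        exact (Equiv.summable_iff (f := fun q : ℕ × (Fin r → ℕ) => |f 0 q.1 * ∏ a, f a.succ (q.2 a)|)
          (Fin.consEquiv (fun _ : Fin (r + 1) => ℕ)).symm).mpr (by simpa only [abs_mul] using S2)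
      · rw [key, (Fin.consEquiv (fun _ : Fin (r + 1) => ℕ)).symm.tsum_eq
          (fun q : ℕ × (Fin r → ℕ) => f 0 q.1 * ∏ a, f a.succ (q.2 a))]
        have hmul : ∑' q : ℕ × (Fin r → ℕ), f 0 q.1 * ∏ a, f a.succ (q.2 a)
            = (∑' k, f 0 k) * ∑' ν : Fin r → ℕ, ∏ a, f a.succ (ν a) := by
          apply mul_tsum_aux (fun k => f 0 k) (fun ν : Fin r → ℕ => ∏ a, f a.succ (ν a)) h0
          exact hT
        rw [hmul, ihT, Fin.prod_univ_succ (fun a => ∑' k, f a k)]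

lemma prod_tsum_pi {ι : Type*} [Fintype ι] (f : ι → ℕ → ℝ)
    (hf : ∀ a, Summable fun k => |f a k|) :
    Summable (fun n : ι → ℕ => |∏ a, f a (n a)|) ∧
      (∑' n : ι → ℕ, ∏ a, f a (n a)) = ∏ a, ∑' k, f a k := by
  classical
  set eqv := Fintype.equivFin ι with heqv
  set B : (ι → ℕ) ≃ (Fin (Fintype.card ι) → ℕ) := Equiv.arrowCongr eqv (Equiv.refl ℕ) with hB
  obtain ⟨hS, hT⟩ := fin_prod_tsum _ (fun i => f (eqv.symm i)) (fun i => hf _)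
  set G : (Fin (Fintype.card ι) → ℕ) → ℝ := fun ν => ∏ i, f (eqv.symm i) (ν i) with hG
  have key : ∀ n : ι → ℕ, ∏ a, f a (n a) = G (B n) := by
    intro n
    rw [hG, ← Equiv.prod_comp eqv.symm (fun a => f a (n a))]
    rfl
  constructor
  · have habs : (fun n : ι → ℕ => |∏ a, f a (n a)|) = fun n => |G (B n)| := by
      funext n; rw [key]
    rw [habs]
    exact B.summable_iff.mpr hS
  · rw [show (fun n : ι → ℕ => ∏ a, f a (n a)) = fun n => G (B n) from funext key,
      B.tsum_eq G, hG]
    exact hT.trans (Equiv.prod_comp eqv.symm fun a => ∑' k, f a k)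


end ProdTsum

section CharSum

variable (m N : ℕ) (γ : OEdge m → ℤ)

/-- the mod-2 source constraint function of a current `n` -/
noncomputable def cnn (n : {p // p ∈ Pfin m N} → ℕ) (e : OEdge m) : ZMod 2 :=
  (γ e : ZMod 2) + ∑ p ∈ (Pfin m N).attach, (n p : ZMod 2) * (if touch p.1 e then 1 else 0)

/-- the constraint: `n` has source `γ` -/
def condn (n : {p // p ∈ Pfin m N} → ℕ) : Prop := ∀ e ∈ Efin m N, cnn m N γ n e = 0

variable {m N γ}

lemma wilson_eq (hγ : LoopIn m N γ) {σ : OEdge m → ZMod 2} (hσ : σ ∈ Omega1 m N) :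
    wilson m γ σ = rho (∑ e ∈ Efin m N, (γ e : ZMod 2) * σ e) := by
  classical
  have hS : ({e : OEdge m | γ e ≠ 0 ∧ e.ori = true}).Finite :=
    hγ.1.finite_supp.subset (fun e he => he.1)
  have hcoe : {e : OEdge m | γ e ≠ 0 ∧ e.ori = true} = ↑hS.toFinset := hS.coe_toFinset.symm
  rw [wilson, hcoe, finprod_mem_coe_finset, ← rho_sum]
  congr 1
  have hsub : hS.toFinset ⊆ Efin m N := by
    intro e he
    rw [Set.Finite.mem_toFinset] at he
    exact mem_Efin.mpr ⟨hγ.2 e he.1, he.2⟩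
  have hzero : ∀ e ∈ Efin m N, e ∉ hS.toFinset → (γ e : ZMod 2) * σ e = 0 := by
    intro e heE heS
    rw [Set.Finite.mem_toFinset, Set.mem_setOf_eq] at heS
    rw [mem_Efin] at heE
    push_neg at heS
    have hz : γ e = 0 := by
      by_contra hne
      exact (heS hne) heE.2
    rw [hz, Int.cast_zero, zero_mul]
  rw [← Finset.sum_subset hsub hzero]
  apply Finset.sum_congr rfl
  intro e he
  rw [Set.Finite.mem_toFinset] at he
  rcases hγ.1.vals e with hv | hv | hv
  · rw [hv, show ((-1 : ℤ) : ZMod 2) = 1 by decide, one_mul]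
  · exact absurd hv he.1
  · rw [hv, Int.cast_one, one_mul]

lemma linearize (hγ : LoopIn m N γ) {σ : OEdge m → ZMod 2} (hσ : σ ∈ Omega1 m N)
    (n : {p // p ∈ Pfin m N} → ℕ) :
    wilson m γ σ * ∏ p ∈ (Pfin m N).attach, rho (dOne σ p.1) ^ (n p)
      = rho (∑ e ∈ Efin m N, cnn m N γ n e * σ e) := by
  classical
  have hplaq : ∏ p ∈ (Pfin m N).attach, rho (dOne σ p.1) ^ (n p)
      = rho (∑ e ∈ Efin m N,
          (∑ p ∈ (Pfin m N).attach, (n p : ZMod 2) * (if touch p.1 e then 1 else 0)) * σ e) := by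
    have h1 : ∀ p ∈ (Pfin m N).attach, rho (dOne σ p.1) ^ (n p)
        = rho ((n p : ZMod 2) * dOne σ p.1) := fun p _ => rho_pow _ _
    rw [Finset.prod_congr rfl h1, ← rho_sum]
    congr 1
    have h2 : ∀ p ∈ (Pfin m N).attach, (n p : ZMod 2) * dOne σ p.1
        = ∑ e ∈ Efin m N, (n p : ZMod 2) * ((if touch p.1 e then 1 else 0) * σ e) := by
      intro p hp
      have hpm := p.2
      rw [mem_Pfin] at hpm
      rw [dOne_eq hσ.2 hpm.1 hpm.2, Finset.mul_sum]
    rw [Finset.sum_congr rfl h2, Finset.sum_comm]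
    apply Finset.sum_congr rfl
    intro e _
    rw [Finset.sum_mul]
    apply Finset.sum_congr rfl
    intro p _
    ring
  rw [wilson_eq hγ hσ, hplaq, ← rho_add]
  congr 1
  rw [← Finset.sum_add_distrib]
  apply Finset.sum_congr rfl
  intro e _
  rw [cnn, add_mul]

lemma char_sum (hγ : LoopIn m N γ) (n : {p // p ∈ Pfin m N} → ℕ) :
    ∑ σ ∈ Ofin m N, wilson m γ σ * ∏ p ∈ (Pfin m N).attach, rho (dOne σ p.1) ^ (n p)
      = if condn m N γ n then (Nat.card ↥(Omega1 m N) : ℝ) else 0 := by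
  classical
  have hlin : ∀ σ ∈ Ofin m N,
      wilson m γ σ * ∏ p ∈ (Pfin m N).attach, rho (dOne σ p.1) ^ (n p)
        = rho (∑ e ∈ Efin m N, cnn m N γ n e * σ e) := by
    intro σ hσ
    exact linearize hγ (mem_Ofin.mp hσ) n
  rw [Finset.sum_congr rfl hlin]
  by_cases hc : condn m N γ n
  · rw [if_pos hc]
    have : ∀ σ ∈ Ofin m N, rho (∑ e ∈ Efin m N, cnn m N γ n e * σ e) = 1 := by
      intro σ _
      have : ∑ e ∈ Efin m N, cnn m N γ n e * σ e = 0 := by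
        apply Finset.sum_eq_zero
        intro e he
        rw [hc e he, zero_mul]
      rw [this, rho_zero]
    rw [Finset.sum_congr rfl this, Finset.sum_const, nsmul_eq_mul, mul_one, Ofin_card]
  · rw [if_neg hc]
    rw [condn] at hc
    push_neg at hc
    obtain ⟨e0, he0, hc0⟩ := hc
    have hc1 : cnn m N γ n e0 = 1 := by
      rcases zmod2_cases (cnn m N γ n e0) with h | h
      · exact absurd h hc0
      · exact h
    rw [mem_Efin] at he0
    set δ : OEdge m → ZMod 2 := fun e => if e = e0 ∨ e = OEdge.neg e0 then 1 else 0 with hδ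
    have hδneg : ∀ e, δ (OEdge.neg e) = δ e := by
      intro e
      simp only [hδ]
      by_cases h : e = e0 ∨ e = OEdge.neg e0
      · rw [if_pos h, if_pos ?_]
        rcases h with rfl | rfl
        · exact Or.inr rfl
        · exact Or.inl (OEdge.neg_neg e0)
      · rw [if_neg h, if_neg ?_]
        intro hcon
        apply h
        rcases hcon with h1 | h1
        · right
          rw [← OEdge.neg_neg e, h1]
        · left
          exact OEdge_neg_inj h1
    have hδmem : ∀ σ ∈ Ofin m N, σ + δ ∈ Ofin m N := by
      intro σ hσm
      rw [mem_Ofin] at hσm ⊢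
      constructor
      · intro e he
        have hd : δ e = 0 := by
          simp only [hδ]
          rw [if_neg]
          rintro (rfl | rfl)
          · exact he he0.1
          · exact he he0.1
        show σ e + δ e = 0
        rw [hσm.1 e he, hd, add_zero]
      · intro e
        show σ (OEdge.neg e) + δ (OEdge.neg e) = -(σ e + δ e)
        rw [hσm.2 e, hδneg e, neg_add, zmod2_neg (δ e)]
    apply Finset.sum_involution (fun σ _ => σ + δ)
    · intro σ hσm
      have hsum : ∑ e ∈ Efin m N, cnn m N γ n e * (σ + δ) e
          = (∑ e ∈ Efin m N, cnn m N γ n e * σ e) + 1 := by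
        have : ∀ e ∈ Efin m N, cnn m N γ n e * (σ + δ) e
            = cnn m N γ n e * σ e + cnn m N γ n e * δ e := by
          intro e _
          show cnn m N γ n e * (σ e + δ e) = _
          ring
        rw [Finset.sum_congr rfl this, Finset.sum_add_distrib]
        congr 1
        have hz : ∀ e ∈ Efin m N, e ≠ e0 → cnn m N γ n e * δ e = 0 := by
          intro e heE hne
          have hd : δ e = 0 := by
            simp only [hδ]
            rw [if_neg]
            rintro (rfl | rfl)
            · exact hne rfl
            · rw [mem_Efin] at heE
              have h5 := heE.2
              simp [OEdge.neg, he0.2] at h5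
          rw [hd, mul_zero]
        rw [Finset.sum_eq_single_of_mem e0 (mem_Efin.mpr he0) hz, hc1]
        simp only [hδ]
        simp
      rw [hsum, rho_add, rho_one]
      ring
    · intro σ hσm hfne
      intro hcon
      have h2 : σ e0 + δ e0 = σ e0 := congrFun hcon e0
      have h3 : δ e0 = 0 := by
        have h6 : σ e0 + δ e0 = σ e0 + 0 := by rw [h2, add_zero]
        exact add_left_cancel h6
      have h4 : δ e0 = (1 : ZMod 2) := by
        simp only [hδ]
        simp
      rw [h4] at h3
      exact one_ne_zero h3
    · exact hδmem
    · intro σ hσm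
      funext e
      show σ e + δ e + δ e = σ e
      rw [add_assoc, zmod2_add_self, add_zero]

end CharSum

section Currents

variable (m N : ℕ)

/-- extension of a function on positive plaquettes to a current -/
noncomputable def extCur (n : {p // p ∈ Pfin m N} → ℕ) : OPlaq m → ℤ := fun p =>
  if h : p ∈ Pfin m N then (n ⟨p, h⟩ : ℤ)
  else if h' : OPlaq.neg p ∈ Pfin m N then -(n ⟨OPlaq.neg p, h'⟩ : ℤ) else 0

variable {m N}

lemma extCur_apply_pos (n : {p // p ∈ Pfin m N} → ℕ) {p : OPlaq m} (h : p ∈ Pfin m N) :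
    extCur m N n p = (n ⟨p, h⟩ : ℤ) := dif_pos h

lemma neg_not_mem_Pfin {p : OPlaq m} (h : p ∈ Pfin m N) : OPlaq.neg p ∉ Pfin m N := by
  rw [mem_Pfin] at h ⊢
  intro hcon
  have := hcon.2
  simp [OPlaq.neg, h.2] at this

lemma extCur_nonC2 (n : {p // p ∈ Pfin m N} → ℕ) {p : OPlaq m} (h : p ∉ C2 m N) :
    extCur m N n p = 0 := by
  have h1 : p ∉ Pfin m N := fun hc => h (mem_Pfin.mp hc).1
  have h2 : OPlaq.neg p ∉ Pfin m N := fun hc => h (neg_mem_C2.mp (mem_Pfin.mp hc).1)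
  rw [extCur, dif_neg h1, dif_neg h2]

lemma extCur_neg (n : {p // p ∈ Pfin m N} → ℕ) (p : OPlaq m) :
    extCur m N n (OPlaq.neg p) = - extCur m N n p := by
  by_cases h : p ∈ Pfin m N
  · have h2 : OPlaq.neg p ∉ Pfin m N := neg_not_mem_Pfin h
    simp [extCur, h, h2, OPlaq.neg_neg]
  · by_cases h' : OPlaq.neg p ∈ Pfin m N
    · simp [extCur, h, h', OPlaq.neg_neg]
    · simp [extCur, h, h', OPlaq.neg_neg]

lemma extCur_isCurrent (n : {p // p ∈ Pfin m N} → ℕ) : IsCurrent m N (extCur m N n) := by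
  refine ⟨fun p hp => extCur_nonC2 n hp, extCur_neg n, ?_⟩
  intro p hp
  have hmem : p ∈ Pfin m N := mem_Pfin.mpr hp
  rw [extCur_apply_pos n hmem]
  exact Int.natCast_nonneg _

lemma cob_sum_ext (n : {p // p ∈ Pfin m N} → ℕ) (e : OEdge m) :
    (∑ᶠ p ∈ cob m N e, ((extCur m N n p : ZMod 2))) =
      ∑ p ∈ (Pfin m N).attach, (n p : ZMod 2) * (if touch p.1 e then 1 else 0) := by
  rw [cob_sum _ (extCur_neg n) e,
    ← Finset.sum_attach (Pfin m N)
      (fun p => ((extCur m N n p : ℤ) : ZMod 2) * (if touch p e then 1 else 0))]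
  apply Finset.sum_congr rfl
  intro p _
  congr 1
  rw [extCur_apply_pos n p.2]
  push_cast
  rfl

lemma extCur_mem_iff {γ : OEdge m → ℤ} (hγ : LoopIn m N γ) (n : {p // p ∈ Pfin m N} → ℕ) :
    extCur m N n ∈ CurSet m N γ ↔ condn m N γ n := by
  constructor
  · intro h e he
    rw [mem_Efin] at he
    have hsrc := h.2 e he.1
    rw [cob_sum_ext n e] at hsrc
    exact hsrc
  · intro hc
    refine ⟨extCur_isCurrent n, ?_⟩
    intro e he
    rw [cob_sum_ext n e]
    by_cases ho : e.ori = true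
    · exact hc e (mem_Efin.mpr ⟨he, ho⟩)
    · have hoe : e.ori = false := by simpa using ho
      have hne : OEdge.neg e ∈ Efin m N := by
        rw [mem_Efin]
        refine ⟨he, ?_⟩
        show (!e.ori) = true
        rw [hoe]
        rfl
      have h2 := hc (OEdge.neg e) hne
      rw [cnn] at h2
      have hγe : ((γ e : ZMod 2)) = ((γ (OEdge.neg e) : ZMod 2)) := by
        rw [hγ.1.antisym e, Int.cast_neg, zmod2_neg]
      have hsum : ∀ p ∈ (Pfin m N).attach, ((n p : ZMod 2)) * (if touch p.1 (OEdge.neg e) then 1 else 0)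
          = ((n p : ZMod 2)) * (if touch p.1 e then 1 else 0) := by
        intro p _
        congr 1
        exact if_congr (touch_neg p.1 e) rfl rfl
      rw [Finset.sum_congr rfl hsum] at h2
      rw [hγe]
      exact h2

lemma ext_restrict {c : OPlaq m → ℤ} (hc : IsCurrent m N c) :
    extCur m N (fun p : {p // p ∈ Pfin m N} => (c p.1).toNat) = c := by
  funext p
  by_cases h : p ∈ Pfin m N
  · rw [extCur_apply_pos _ h]
    exact Int.toNat_of_nonneg (hc.2.2 p (mem_Pfin.mp h))
  · by_cases h' : OPlaq.neg p ∈ Pfin m N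
    · rw [extCur, dif_neg h, dif_pos h']
      have : ((c (OPlaq.neg p)).toNat : ℤ) = c (OPlaq.neg p) :=
        Int.toNat_of_nonneg (hc.2.2 _ (mem_Pfin.mp h'))
      rw [this, hc.2.1 p, neg_neg]
    · have hpC2 : p ∉ C2 m N := by
        intro hpm
        rcases Bool.eq_false_or_eq_true p.ori with hor | hor
        · exact h (mem_Pfin.mpr ⟨hpm, hor⟩)
        · apply h'
          rw [mem_Pfin]
          refine ⟨neg_mem_C2.mpr hpm, ?_⟩
          show (!p.ori) = true
          rw [hor]
          rfl
      rw [extCur_nonC2 _ hpC2, hc.1 p hpC2]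

/-- the equivalence between constrained collections of plaquette multiplicities
and currents with source `γ` -/
noncomputable def curEquiv {γ : OEdge m → ℤ} (hγ : LoopIn m N γ) :
    {n : {p // p ∈ Pfin m N} → ℕ // condn m N γ n} ≃ ↥(CurSet m N γ) where
  toFun n := ⟨extCur m N n.1, (extCur_mem_iff hγ n.1).mpr n.2⟩
  invFun c := ⟨fun p => (c.1 p.1).toNat, by
    have hmem : extCur m N (fun p : {p // p ∈ Pfin m N} => (c.1 p.1).toNat) ∈ CurSet m N γ := by
      rw [ext_restrict c.2.1]
      exact c.2
    exact (extCur_mem_iff hγ _).mp hmem⟩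
  left_inv n := by
    apply Subtype.ext
    funext p
    show (extCur m N n.1 p.1).toNat = n.1 p
    rw [extCur_apply_pos n.1 p.2]
    exact Int.toNat_natCast _
  right_inv c := by
    apply Subtype.ext
    show extCur m N (fun p : {p // p ∈ Pfin m N} => (c.1 p.1).toNat) = c.1
    exact ext_restrict c.2.1

end Currents

section Assembly

variable {m N : ℕ}

lemma OPlaq_neg_inj {p q : OPlaq m} (h : OPlaq.neg p = OPlaq.neg q) : p = q := by
  rw [← OPlaq.neg_neg p, h, OPlaq.neg_neg]

lemma univ_attach {α : Type*} (s : Finset α) : s.attach = (Finset.univ : Finset {x // x ∈ s}) :=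
  rfl

lemma action_exp {σ : OEdge m → ZMod 2} (hσ : σ ∈ Omega1 m N) (β : ℝ) :
    Real.exp (-β * action m N σ) = ∏ p ∈ (Pfin m N).attach, Real.exp (2*β * rho (dOne σ p.1)) := by
  classical
  have hunion : C2fin m N = Pfin m N ∪ (Pfin m N).image OPlaq.neg := by
    ext p
    rw [mem_C2fin, Finset.mem_union, mem_Pfin, Finset.mem_image]
    constructor
    · intro hp
      by_cases ho : p.ori = true
      · exact Or.inl ⟨hp, ho⟩
      · right
        refine ⟨OPlaq.neg p, mem_Pfin.mpr ⟨neg_mem_C2.mpr hp, ?_⟩, OPlaq.neg_neg p⟩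
        have hof : p.ori = false := by simpa using ho
        show (!p.ori) = true
        rw [hof]
        rfl
    · rintro (⟨hp, -⟩ | ⟨q, hq, rfl⟩)
      · exact hp
      · exact neg_mem_C2.mpr (mem_Pfin.mp hq).1
  have hdisj : Disjoint (Pfin m N) ((Pfin m N).image OPlaq.neg) := by
    rw [Finset.disjoint_left]
    intro p hp hpim
    rw [Finset.mem_image] at hpim
    obtain ⟨q, hq, rfl⟩ := hpim
    exact (neg_not_mem_Pfin hq) hp
  have hsum2 : ∑ p ∈ C2fin m N, rho (dOne σ p) = 2 * ∑ p ∈ Pfin m N, rho (dOne σ p) := by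
    rw [hunion, Finset.sum_union hdisj,
      Finset.sum_image (fun p _ q _ h => OPlaq_neg_inj h)]
    have hcg : ∀ p ∈ Pfin m N, rho (dOne σ (OPlaq.neg p)) = rho (dOne σ p) := fun p _ => by
      rw [dOne_neg hσ.2]
    rw [Finset.sum_congr rfl hcg, two_mul]
  have hact : action m N σ = - (∑ p ∈ C2fin m N, rho (dOne σ p)) := by
    rw [action, ← Set.Finite.coe_toFinset (finite_C2 m N), finsum_mem_coe_finset]
    rfl
  have hkey : -β * action m N σ = ∑ p ∈ Pfin m N, 2*β * rho (dOne σ p) := by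
    rw [hact, hsum2]
    rw [show -β * -(2 * ∑ p ∈ Pfin m N, rho (dOne σ p))
        = (2*β) * ∑ p ∈ Pfin m N, rho (dOne σ p) by ring, Finset.mul_sum]
  rw [hkey, Real.exp_sum, ← Finset.prod_attach]

lemma wgt_ext (β : ℝ) (n : {p // p ∈ Pfin m N} → ℕ) :
    wgt m N β (extCur m N n)
      = ∏ p ∈ (Pfin m N).attach, (2*β)^(n p) / ((n p).factorial : ℝ) := by
  have hset : C2plus m N = ↑(Pfin m N) := by
    ext p
    rw [Finset.mem_coe, mem_Pfin]
    exact Iff.rfl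
  rw [wgt, hset, finprod_mem_coe_finset, ← Finset.prod_attach]
  apply Finset.prod_congr rfl
  intro p _
  rw [extCur_apply_pos n p.2, Int.toNat_natCast]

end Assembly

/-- **Current expansion** (Theorem 1): for every `β ≥ 0` and every loop `γ` supported in
`B_N`, `Z_{β,N}[γ] = |Ω^1(B_N,ℤ₂)| · Σ_{n ∈ 𝒞_γ} w_β(n)`, the sum converging absolutely. -/
theorem current_expansion (m N : ℕ) (hm : 3 ≤ m) (hN : 1 ≤ N) (β : ℝ) (hβ : 0 ≤ β)
    (γ : OEdge m → ℤ) (hγ : LoopIn m N γ) :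
    Summable (fun n : ↥(CurSet m N γ) => |wgt m N β n.val|) ∧
      Z m N β γ = (Nat.card ↥(Omega1 m N) : ℝ) * ∑' n : ↥(CurSet m N γ), wgt m N β n.val := by
  classical
  -- the absolute weight is globally summable over all multiplicity functions
  have hwf : ∀ p : {p // p ∈ Pfin m N}, Summable fun k : ℕ => |(2*β) ^ k / (k.factorial : ℝ)| :=
    fun p => by
      simpa only [Real.norm_eq_abs] using NormedSpace.norm_expSeries_div_summable (2*β)
  obtain ⟨hwS, hwT⟩ := prod_tsum_pi
    (fun _ : {p // p ∈ Pfin m N} => fun k : ℕ => (2*β)^k / (k.factorial : ℝ)) hwf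
  set CE := curEquiv hγ with hCE
  have hwgt : ∀ nc : {n : {p // p ∈ Pfin m N} → ℕ // condn m N γ n},
      wgt m N β (CE nc).1 = ∏ a, (2*β)^(nc.1 a) / ((nc.1 a).factorial : ℝ) := by
    intro nc
    show wgt m N β (extCur m N nc.1) = _
    rw [wgt_ext β nc.1, univ_attach]
  constructor
  · apply CE.summable_iff.mp
    have hfun : ((fun c : ↥(CurSet m N γ) => |wgt m N β c.1|) ∘ CE)
        = fun nc : {n : {p // p ∈ Pfin m N} → ℕ // condn m N γ n}
            => |∏ a, (2*β)^(nc.1 a) / ((nc.1 a).factorial : ℝ)| := by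
      funext nc
      show |wgt m N β (CE nc).1| = _
      rw [hwgt nc]
    rw [hfun]
    exact hwS.subtype _
  · -- expansion of the partition function
    have hστ : ∀ σ ∈ Ofin m N,
        (Summable fun n : {p // p ∈ Pfin m N} → ℕ =>
          wilson m γ σ * ∏ a, (2*β*rho (dOne σ a.1))^(n a) / ((n a).factorial : ℝ)) ∧
        wilson m γ σ * Real.exp (-β * action m N σ)
          = ∑' n : {p // p ∈ Pfin m N} → ℕ,
              wilson m γ σ * ∏ a, (2*β*rho (dOne σ a.1))^(n a) / ((n a).factorial : ℝ) := by
      intro σ hσm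
      have hf : ∀ a : {p // p ∈ Pfin m N},
          Summable fun k : ℕ => |(2*β*rho (dOne σ a.1))^k / (k.factorial : ℝ)| := fun a => by
        simpa only [Real.norm_eq_abs] using
          NormedSpace.norm_expSeries_div_summable (2*β*rho (dOne σ a.1))
      obtain ⟨hS2, hT2⟩ := prod_tsum_pi
        (fun a : {p // p ∈ Pfin m N} => fun k : ℕ =>
          (2*β*rho (dOne σ a.1))^k / (k.factorial : ℝ)) hf
      refine ⟨(hS2.of_abs).mul_left _, ?_⟩
      rw [action_exp (mem_Ofin.mp hσm) β]
      have hexp1 : ∏ p ∈ (Pfin m N).attach, Real.exp (2*β*rho (dOne σ p.1))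
          = ∏ a : {p // p ∈ Pfin m N}, ∑' k : ℕ, (2*β*rho (dOne σ a.1))^k / (k.factorial : ℝ) := by
        rw [univ_attach]
        apply Finset.prod_congr rfl
        intro p _
        rw [Real.exp_eq_exp_ℝ, NormedSpace.exp_eq_tsum_div]
      rw [hexp1, ← hT2, ← tsum_mul_left]
    have hinner : ∀ n : {p // p ∈ Pfin m N} → ℕ,
        (∑ σ ∈ Ofin m N, wilson m γ σ * ∏ a, (2*β*rho (dOne σ a.1))^(n a) / ((n a).factorial : ℝ))
          = (Nat.card ↥(Omega1 m N) : ℝ) *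
              (if condn m N γ n then ∏ a, (2*β)^(n a) / ((n a).factorial : ℝ) else 0) := by
      intro n
      have hsp : ∀ σ ∈ Ofin m N,
          wilson m γ σ * ∏ a, (2*β*rho (dOne σ a.1))^(n a) / ((n a).factorial : ℝ)
            = (∏ a, (2*β)^(n a) / ((n a).factorial : ℝ)) *
                (wilson m γ σ * ∏ p ∈ (Pfin m N).attach, rho (dOne σ p.1) ^ (n p)) := by
        intro σ _
        rw [univ_attach]
        have hfac : ∀ a ∈ (Finset.univ : Finset {p // p ∈ Pfin m N}),
            (2*β*rho (dOne σ a.1))^(n a) / ((n a).factorial : ℝ)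
              = ((2*β)^(n a) / ((n a).factorial : ℝ)) * rho (dOne σ a.1) ^ (n a) := by
          intro a _
          rw [mul_pow]
          ring
        rw [Finset.prod_congr rfl hfac, Finset.prod_mul_distrib]
        ring
      rw [Finset.sum_congr rfl hsp, ← Finset.mul_sum, char_sum hγ n]
      by_cases hcnd : condn m N γ n
      · rw [if_pos hcnd, if_pos hcnd]
        ring
      · rw [if_neg hcnd, if_neg hcnd]
        ring
    calc Z m N β γ
        = ∑ σ ∈ Ofin m N, wilson m γ σ * Real.exp (-β * action m N σ) := by
          rw [Z, ← Set.Finite.coe_toFinset (finite_Omega1 m N), finsum_mem_coe_finset]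
          rfl
      _ = ∑ σ ∈ Ofin m N, ∑' n : {p // p ∈ Pfin m N} → ℕ,
            wilson m γ σ * ∏ a, (2*β*rho (dOne σ a.1))^(n a) / ((n a).factorial : ℝ) :=
          Finset.sum_congr rfl (fun σ hσm => (hστ σ hσm).2)
      _ = ∑' n : {p // p ∈ Pfin m N} → ℕ, ∑ σ ∈ Ofin m N,
            wilson m γ σ * ∏ a, (2*β*rho (dOne σ a.1))^(n a) / ((n a).factorial : ℝ) :=
          (Summable.tsum_finsetSum (fun σ hσm => (hστ σ hσm).1)).symm
      _ = ∑' n : {p // p ∈ Pfin m N} → ℕ, (Nat.card ↥(Omega1 m N) : ℝ) *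
            (if condn m N γ n then ∏ a, (2*β)^(n a) / ((n a).factorial : ℝ) else 0) :=
          tsum_congr hinner
      _ = (Nat.card ↥(Omega1 m N) : ℝ) * ∑' n : {p // p ∈ Pfin m N} → ℕ,
            (if condn m N γ n then ∏ a, (2*β)^(n a) / ((n a).factorial : ℝ) else 0) :=
          tsum_mul_left
      _ = (Nat.card ↥(Omega1 m N) : ℝ) * ∑' n : ↥(CurSet m N γ), wgt m N β n.val := by
          congr 1
          have hind : ∑' nc : ↥{n : {p // p ∈ Pfin m N} → ℕ | condn m N γ n},
              (fun n => ∏ a, (2*β)^(n a) / ((n a).factorial : ℝ)) nc.1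
                = ∑' n : {p // p ∈ Pfin m N} → ℕ,
                    Set.indicator {n | condn m N γ n}
                      (fun n => ∏ a, (2*β)^(n a) / ((n a).factorial : ℝ)) n :=
            tsum_subtype {n : {p // p ∈ Pfin m N} → ℕ | condn m N γ n}
              (fun n => ∏ a, (2*β)^(n a) / ((n a).factorial : ℝ))
          have hind2 : ∀ n : {p // p ∈ Pfin m N} → ℕ,
              Set.indicator {n | condn m N γ n}
                  (fun n => ∏ a, (2*β)^(n a) / ((n a).factorial : ℝ)) n
                = (if condn m N γ n then ∏ a, (2*β)^(n a) / ((n a).factorial : ℝ) else 0) := by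
            intro n
            rw [Set.indicator_apply]
            simp only [Set.mem_setOf_eq]
          rw [← tsum_congr hind2, ← hind]
          rw [← Equiv.tsum_eq CE (fun c => wgt m N β c.1)]
          exact (tsum_congr hwgt).symm


end LGT
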